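/- Let q be an odd prime power. The number of elements α ∈ F_{q^2} such that α² + α ≠ 0 and α² + α is a (q+1)-st power in F_{q^2}^* equals 2q - 3. -/

import Mathlib

open Polynomial

lemma auxA {F : Type*} [Field F] [Fintype F] (q : ℕ) (hq3 : 3 ≤ q)
    (hcard : Fintype.card F = q ^ 2) (x : F) (hx : x ≠ 0) :
    (∃ c : F, c ≠ 0 ∧ c ^ (q + 1) = x) ↔ x ^ (q - 1) = 1 := by
  classical
  have hfac : (q + 1) * (q - 1) = q ^ 2 - 1 := by
    zify [show 1 ≤ q by omega, show 1 ≤ q ^ 2 by nlinarith]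
    ring
  constructor
  · rintro ⟨c, hc, rfl⟩
    rw [← pow_mul, hfac, ← hcard]
    exact FiniteField.pow_card_sub_one_eq_one c hc
  · intro h
    obtain ⟨g, hg⟩ := IsCyclic.exists_generator (α := Fˣ)
    have hcardu : Fintype.card Fˣ = q ^ 2 - 1 := by
      rw [Fintype.card_units, hcard]
    have horder : orderOf g = q ^ 2 - 1 := by
      rw [orderOf_eq_card_of_forall_mem_zpowers hg, Nat.card_eq_fintype_card, hcardu]
    set u : Fˣ := Units.mk0 x hx with hu
    obtain ⟨k, hk⟩ : ∃ k : ℕ, g ^ k = u := by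
      have := hg u
      rwa [← mem_powers_iff_mem_zpowers, Submonoid.mem_powers_iff] at this
    have hupow : u ^ (q - 1) = 1 := by
      ext
      rw [Units.val_pow_eq_pow_val, hu, Units.val_mk0, Units.val_one]
      exact h
    have hdvd : (q ^ 2 - 1) ∣ k * (q - 1) := by
      rw [← horder]
      apply orderOf_dvd_of_pow_eq_one
      rw [pow_mul, hk]
      exact hupow
    rw [← hfac] at hdvd
    have hdvd2 : (q + 1) ∣ k := by
      have h1 : 0 < q - 1 := by omega
      exact (Nat.mul_dvd_mul_iff_right h1).mp hdvd
    obtain ⟨m, rfl⟩ := hdvd2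
    refine ⟨((g ^ m : Fˣ) : F), Units.ne_zero _, ?_⟩
    have h2 : (g ^ m) ^ (q + 1) = u := by rw [← hk, ← pow_mul, mul_comm]
    rw [← Units.val_pow_eq_pow_val, h2, hu, Units.val_mk0]

lemma auxB {F : Type*} [Field F] [Fintype F] [DecidableEq F] (g : F[X])
    (hdvd : g ∣ X ^ (Fintype.card F) - X) :
    g.roots.toFinset.card = g.natDegree := by
  have hf0 : (X ^ (Fintype.card F) - X : F[X]) ≠ 0 :=
    FiniteField.X_pow_card_sub_X_ne_zero F Fintype.one_lt_card
  have hroots : (X ^ (Fintype.card F) - X : F[X]).roots = Finset.univ.val :=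
    FiniteField.roots_X_pow_card_sub_X F
  have hnodup : g.roots.Nodup :=
    Multiset.nodup_of_le (roots.le_of_dvd hf0 hdvd) (hroots ▸ Finset.univ.nodup)
  have hsplit_f : Splits (X ^ (Fintype.card F) - X : F[X]) := by
    rw [splits_iff_card_roots, hroots,
      FiniteField.X_pow_card_sub_X_natDegree_eq F Fintype.one_lt_card]
    exact Finset.card_univ
  have hsplit : Splits g := hsplit_f.of_dvd hf0 hdvd
  rw [Multiset.toFinset_card_eq_card_iff_nodup.mpr hnodup]
  exact splits_iff_card_roots.mp hsplit

open scoped Classical in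
theorem stmt_11 {F : Type*} [Field F] [Fintype F] (q : ℕ)
    (hq : ∃ (p n : ℕ), p.Prime ∧ Odd p ∧ 0 < n ∧ q = p ^ n)
    (hcard : Fintype.card F = q ^ 2) :
    Fintype.card {α : F // α ^ 2 + α ≠ 0 ∧ ∃ c : F, c ≠ 0 ∧ c ^ (q + 1) = α ^ 2 + α}
      = 2 * q - 3 := by
  classical
  obtain ⟨p, n, hp, hpodd, hn, hqe⟩ := hq
  haveI : Fact p.Prime := ⟨hp⟩
  have hp3 : 3 ≤ p := by
    have h2 := hp.two_le
    rcases hpodd with ⟨k, hk⟩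
    omega
  have hq3 : 3 ≤ q := by
    rw [hqe]
    calc 3 ≤ p := hp3
    _ ≤ p ^ n := Nat.le_self_pow hn.ne' p
  have hq0 : q ≠ 0 := by omega
  have hqodd : Odd q := hqe ▸ hpodd.pow
  -- characteristic of F is p
  have hchar0 := ringChar.charP F
  obtain ⟨m, hrprime, hcardF⟩ := FiniteField.card F (ringChar F)
  have hrp : ringChar F = p := by
    have h1 : ringChar F ∣ p ^ (2 * n) := by
      rw [hcard, hqe, ← pow_mul, mul_comm n 2] at hcardF
      exact hcardF ▸ dvd_pow_self (ringChar F) (by positivity)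
    exact (Nat.prime_dvd_prime_iff_eq hrprime hp).mp (hrprime.dvd_of_dvd_pow h1)
  haveI hcharp : CharP F p := hrp ▸ hchar0
  -- Frobenius
  have frobF : ∀ x y : F, (x + y) ^ q = x ^ q + y ^ q := by
    intro x y; rw [hqe]; exact add_pow_char_pow x y p n
  have frobP : ∀ x y : F[X], (x + y) ^ q = x ^ q + y ^ q := by
    intro x y; rw [hqe]; exact add_pow_char_pow x y p n
  have frobPs : ∀ x y : F[X], (x - y) ^ q = x ^ q - y ^ q := by
    intro x y; rw [hqe]; exact sub_pow_char_pow (p := p) x y n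
  set g1 : F[X] := X ^ q - X with hg1
  set g2 : F[X] := X ^ q + X + 1 with hg2
  have hdvd1 : g1 ∣ X ^ (q ^ 2) - X := by
    have h1 : g1 ^ q = X ^ (q ^ 2) - X ^ q := by
      rw [hg1, frobPs, ← pow_mul, ← pow_two]
    have h2 : g1 * (g1 ^ (q - 1) + 1) = g1 ^ q + g1 := by
      rw [mul_add, mul_one, mul_comm, pow_sub_one_mul hq0]
    have key : (X ^ (q ^ 2) - X : F[X]) = g1 * (g1 ^ (q - 1) + 1) := by
      rw [h2, h1, hg1]; ring
    rw [key]; exact dvd_mul_right _ _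
  have hdvd2 : g2 ∣ X ^ (q ^ 2) - X := by
    have h1 : g2 ^ q = X ^ (q ^ 2) + X ^ q + 1 := by
      rw [hg2, frobP, frobP, one_pow, ← pow_mul, ← pow_two]
    have h2 : g2 * (g2 ^ (q - 1) - 1) = g2 ^ q - g2 := by
      rw [mul_sub, mul_one, mul_comm, pow_sub_one_mul hq0]
    have key : (X ^ (q ^ 2) - X : F[X]) = g2 * (g2 ^ (q - 1) - 1) := by
      rw [h2, h1, hg2]; ring
    rw [key]; exact dvd_mul_right _ _
  have hdeg1 : g1.natDegree = q := by
    rw [hg1]; compute_degree!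
    all_goals first
      | omega
      | simp [show ¬(1 = q) by omega, show ¬(q = 0) by omega]
  have hdeg2 : g2.natDegree = q := by
    rw [hg2]; compute_degree!
    all_goals first
      | omega
      | simp [show ¬(1 = q) by omega, show ¬(q = 0) by omega]
  have hg1ne : g1 ≠ 0 := fun h => hq0 (by rw [← hdeg1, h, natDegree_zero])
  have hg2ne : g2 ≠ 0 := fun h => hq0 (by rw [← hdeg2, h, natDegree_zero])
  have hA : (roots g1).toFinset.card = q := by
    rw [auxB g1 (by rw [hcard]; exact hdvd1), hdeg1]
  have hB : (roots g2).toFinset.card = q := by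
    rw [auxB g2 (by rw [hcard]; exact hdvd2), hdeg2]
  have memA : ∀ x : F, x ∈ (roots g1).toFinset ↔ x ^ q = x := by
    intro x
    rw [Multiset.mem_toFinset, mem_roots hg1ne, IsRoot.def, hg1]
    simp [sub_eq_zero]
  have memB : ∀ x : F, x ∈ (roots g2).toFinset ↔ x ^ q + x + 1 = 0 := by
    intro x
    rw [Multiset.mem_toFinset, mem_roots hg2ne, IsRoot.def, hg2]
    simp
  have h2ne : (2 : F) ≠ 0 := by
    intro h
    have hd : (p : ℕ) ∣ 2 := (CharP.cast_eq_zero_iff F p 2).mp (by exact_mod_cast h)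
    have := Nat.le_of_dvd (by norm_num) hd
    omega
  have h2q : (2 : F) ^ q = 2 := by
    have := frobF 1 1
    norm_num at this
    convert this using 2
  have hhalf : ((-(2⁻¹) : F)) ^ q = -(2⁻¹) := by
    rw [hqodd.neg_pow, inv_pow, h2q]
  have hABint : (roots g1).toFinset ∩ (roots g2).toFinset = {-(2⁻¹ : F)} := by
    ext x
    simp only [Finset.mem_inter, Finset.mem_singleton, memA, memB]
    constructor
    · rintro ⟨h1, h2⟩
      rw [h1] at h2
      exact mul_left_cancel₀ h2ne (by rw [mul_neg, mul_inv_cancel₀ h2ne]; linear_combination h2)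
    · rintro rfl
      refine ⟨hhalf, ?_⟩
      rw [hhalf]
      field_simp
      norm_num
  have h0A : (0 : F) ∈ (roots g1).toFinset := (memA 0).mpr (zero_pow hq0)
  have h1A : (-1 : F) ∈ (roots g1).toFinset := (memA (-1)).mpr (hqodd.neg_one_pow)
  have h0ne1 : (0 : F) ≠ -1 := by
    intro h
    exact one_ne_zero (α := F) (by linear_combination h)
  set T := ((roots g1).toFinset ∪ (roots g2).toFinset) \ {0, -1} with hT
  have hTcard : T.card = 2 * q - 3 := by
    have hsub : ({0, -1} : Finset F) ⊆ (roots g1).toFinset ∪ (roots g2).toFinset := by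
      intro x hx
      rcases Finset.mem_insert.mp hx with h | h
      · exact Finset.mem_union_left _ (h ▸ h0A)
      · rw [Finset.mem_singleton] at h
        exact Finset.mem_union_left _ (h ▸ h1A)
    have hcu := Finset.card_union_add_card_inter (roots g1).toFinset (roots g2).toFinset
    rw [hABint, hA, hB, Finset.card_singleton] at hcu
    have hpair : ({0, -1} : Finset F).card = 2 := by
      rw [Finset.card_insert_of_notMem (by simp [h0ne1]), Finset.card_singleton]
    rw [hT, Finset.card_sdiff_of_subset hsub, hpair]
    omega
  have H : ∀ x : F, x ∈ T ↔
      (x ^ 2 + x ≠ 0 ∧ ∃ c : F, c ≠ 0 ∧ c ^ (q + 1) = x ^ 2 + x) := by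
    intro x
    rw [hT, Finset.mem_sdiff, Finset.mem_union, memA, memB, Finset.mem_insert,
      Finset.mem_singleton]
    have hexp : (x ^ 2 + x) ^ q = (x ^ q) ^ 2 + x ^ q := by
      rw [frobF, ← pow_mul, mul_comm, pow_mul]
    constructor
    · rintro ⟨hor, hnot⟩
      push_neg at hnot
      have hne : x ^ 2 + x ≠ 0 := by
        have hf : x ^ 2 + x = x * (x + 1) := by ring
        rw [hf]
        exact mul_ne_zero hnot.1 (fun h => hnot.2 (eq_neg_of_add_eq_zero_left h))
      refine ⟨hne, ?_⟩
      rw [auxA q hq3 hcard _ hne]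
      have ht : (x ^ 2 + x) ^ q = x ^ 2 + x := by
        rw [hexp]
        rcases hor with h | h
        · rw [h]
        · have hxq : x ^ q = -x - 1 := by linear_combination h
          rw [hxq]; ring
      have hm := pow_sub_one_mul hq0 (x ^ 2 + x)
      rw [ht] at hm
      exact mul_right_cancel₀ hne (by rw [hm, one_mul])
    · rintro ⟨hne, hc⟩
      have hx0 : x ≠ 0 := fun h => hne (by rw [h]; ring)
      have hx1 : x ≠ -1 := fun h => hne (by rw [h]; ring)
      refine ⟨?_, by push_neg; exact ⟨hx0, hx1⟩⟩
      rw [auxA q hq3 hcard _ hne] at hc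
      have ht : (x ^ 2 + x) ^ q = x ^ 2 + x := by
        calc (x ^ 2 + x) ^ q = (x ^ 2 + x) ^ (q - 1) * (x ^ 2 + x) :=
              (pow_sub_one_mul hq0 _).symm
          _ = 1 * (x ^ 2 + x) := by rw [hc]
          _ = x ^ 2 + x := one_mul _
      have heq : (x ^ q) ^ 2 + x ^ q = x ^ 2 + x := by rw [← hexp, ht]
      have hfact : (x ^ q - x) * (x ^ q + x + 1) = 0 := by linear_combination heq
      rcases mul_eq_zero.mp hfact with h | h
      · left; exact sub_eq_zero.mp h
      · right; exact h
  rw [Fintype.card_of_subtype T H]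
  exact hTcard
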